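/- Fréchet-frame reconstruction for the repetition system: each f_i belongs to X_F := ∩_{s∈ℕ} X_s, and for every f ∈ X_F and every s ∈ ℕ the partial sums ∑_{i=1}^{n} g_i(f)·f_i converge to f in the norm ‖·‖_s as n → ∞, where f_i := (1/t_i)·e_{σ(i)} if i is the smallest index in its σ-fiber (i.e. σ(i') < σ(i) for all i' < i) and f_i := 0 otherwise. -/

import Mathlib

noncomputable section

open Set

/-- The space `X_s = {f : ∑ i, a_{i,s}² ⟪f,e_i⟫² < ∞}` (as a subset of `X₀`). -/
def Xs {X₀ : Type*} [NormedAddCommGroup X₀] [InnerProductSpace ℝ X₀]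
    (e : ℕ → X₀) (a : ℕ → ℕ → ℝ) (s : ℕ) : Set X₀ :=
  {f | Summable fun i => (a i s * (inner ℝ f (e i) : ℝ)) ^ 2}

/-- The inner product `⟪f,h⟫_s = ∑ i, a_{i,s}² ⟪f,e_i⟫₀ ⟪h,e_i⟫₀`. -/
def innerS {X₀ : Type*} [NormedAddCommGroup X₀] [InnerProductSpace ℝ X₀]
    (e : ℕ → X₀) (a : ℕ → ℕ → ℝ) (s : ℕ) (f h : X₀) : ℝ :=
  ∑' i, (a i s) ^ 2 * (inner ℝ f (e i) : ℝ) * (inner ℝ h (e i) : ℝ)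

/-- The norm `‖f‖_s = (∑ i, a_{i,s}² ⟪f,e_i⟫₀²)^(1/2)`. -/
def normS {X₀ : Type*} [NormedAddCommGroup X₀] [InnerProductSpace ℝ X₀]
    (e : ℕ → X₀) (a : ℕ → ℕ → ℝ) (s : ℕ) (f : X₀) : ℝ :=
  Real.sqrt (∑' i, (a i s * (inner ℝ f (e i) : ℝ)) ^ 2)

/-- `M_s^c`: the set of `f ∈ X_s` with `|c i| ≤ |g i (f)| = |t i * ⟪f, e (σ i)⟫₀|`. -/
def MSetS {X₀ : Type*} [NormedAddCommGroup X₀] [InnerProductSpace ℝ X₀]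
    (e : ℕ → X₀) (a : ℕ → ℕ → ℝ) (σ : ℕ → ℕ) (t : ℕ → ℝ) (s : ℕ) (c : ℕ → ℝ) :
    Set X₀ :=
  {f | f ∈ Xs e a s ∧ ∀ i, |c i| ≤ |t i * (inner ℝ f (e (σ i)) : ℝ)|}

open Classical in
/-- The reconstruction sequence: `f i = (1/t i) • e (σ i)` if `i` is the smallest
index in its `σ`-fiber, and `f i = 0` otherwise. -/
def fvec {X₀ : Type*} [NormedAddCommGroup X₀] [InnerProductSpace ℝ X₀]
    (e : ℕ → X₀) (σ : ℕ → ℕ) (t : ℕ → ℝ) : ℕ → X₀ :=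
  fun i => if ∀ i' < i, σ i' < σ i then (t i)⁻¹ • e (σ i) else 0

/-!
Since `σ` is monotone, `i` is the first index of its fiber exactly when `σ i` is new among
`σ 0, …, σ i`, so the `n`-th partial sum of `∑ g_i(f) f_i` is the orthogonal projection of `f`
onto the span of `e_k`, `k ∈ σ({0, …, n-1})`. Hence `‖f - Sₙ f‖_s²` is the tail
`∑_{k ∉ σ({0, …, n-1})} a_{k,s}² ⟪f,e_k⟫²`, which tends to `0` because these finite sets
exhaust `ℕ` by surjectivity of `σ`.
-/

open Filter

theorem Orthonormal.inner_sum_smul_left {ι X₀ : Type*} [DecidableEq ι] [NormedAddCommGroup X₀]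
    [InnerProductSpace ℝ X₀] {e : ι → X₀} (he : Orthonormal ℝ e) (c : ι → ℝ) (S : Finset ι)
    (j : ι) : inner ℝ (∑ k ∈ S, c k • e k) (e j) = if j ∈ S then c j else 0 := by
  simp only [sum_inner, real_inner_smul_left, orthonormal_iff_ite.mp he, mul_boole,
    Finset.sum_ite_eq']

theorem Monotone.forall_lt_lt_iff_notMem_image_range {σ : ℕ → ℕ} (hσ : Monotone σ) (n : ℕ) :
    (∀ i < n, σ i < σ n) ↔ σ n ∉ (Finset.range n).image σ := by
  simp only [Finset.mem_image, Finset.mem_range, not_exists, not_and]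
  exact forall₂_congr fun i hi => (hσ hi.le).lt_iff_ne

section Frame

variable {X₀ : Type*} [NormedAddCommGroup X₀] [InnerProductSpace ℝ X₀] {e : ℕ → X₀}

theorem smul_mem_Xs (he : Orthonormal ℝ e) (a : ℕ → ℕ → ℝ) (s : ℕ) (r : ℝ) (j : ℕ) :
    r • e j ∈ Xs e a s := by
  refine summable_of_ne_finset_zero (s := {j}) fun k hk => ?_
  rw [real_inner_smul_left, orthonormal_iff_ite.mp he,
    if_neg (Ne.symm (Finset.notMem_singleton.mp hk))]
  simp

theorem fvec_mem_Xs (he : Orthonormal ℝ e) (a : ℕ → ℕ → ℝ) (σ : ℕ → ℕ) (t : ℕ → ℝ)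
    (i s : ℕ) : fvec e σ t i ∈ Xs e a s := by
  unfold fvec
  split_ifs
  · exact smul_mem_Xs he a s _ _
  · simpa using smul_mem_Xs he a s 0 0

theorem sum_smul_fvec {σ : ℕ → ℕ} (hσ : Monotone σ) {t : ℕ → ℝ} (ht : ∀ i, t i ≠ 0)
    (c : ℕ → ℝ) (n : ℕ) :
    ∑ i ∈ Finset.range n, (t i * c (σ i)) • fvec e σ t i =
      ∑ k ∈ (Finset.range n).image σ, c k • e k := by
  induction n with
  | zero => simp
  | succ n ih =>
    rw [Finset.sum_range_succ, ih, Finset.range_add_one, Finset.image_insert, fvec]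
    split_ifs with hfirst
    · rw [Finset.sum_insert ((hσ.forall_lt_lt_iff_notMem_image_range n).mp hfirst), add_comm,
        smul_smul, mul_right_comm, mul_inv_cancel₀ (ht n), one_mul]
    · rw [Finset.insert_eq_of_mem
        ((iff_not_comm.mp (hσ.forall_lt_lt_iff_notMem_image_range n)).mpr hfirst),
        smul_zero, add_zero]

theorem normS_sub_sum_inner_smul (he : Orthonormal ℝ e) (a : ℕ → ℕ → ℝ) (s : ℕ) (f : X₀)
    (S : Finset ℕ) :
    normS e a s (f - ∑ k ∈ S, inner ℝ f (e k) • e k) =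
      √(∑' k : {k // k ∉ S}, (a k s * inner ℝ f (e k)) ^ 2) := by
  refine congrArg Real.sqrt (Eq.symm ?_)
  refine (tsum_subtype {k | k ∉ S} fun k => (a k s * inner ℝ f (e k)) ^ 2).trans
    (tsum_congr fun k => ?_)
  by_cases hk : k ∈ S <;> simp [inner_sub_left, he.inner_sum_smul_left, hk]

end Frame

theorem frechet_frame_reconstruction_general
    {X₀ : Type*} [NormedAddCommGroup X₀] [InnerProductSpace ℝ X₀]
    (e : HilbertBasis ℕ ℝ X₀) (a : ℕ → ℕ → ℝ)
    (σ : ℕ → ℕ) (t : ℕ → ℝ)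
    (hσmono : Monotone σ) (hσsurj : Function.Surjective σ)
    (ht : ∀ i, t i ≠ 0) :
    (∀ i : ℕ, fvec (⇑e) σ t i ∈ ⋂ s, Xs (⇑e) a s) ∧
    (∀ f ∈ ⋂ s, Xs (⇑e) a s, ∀ s : ℕ,
      Filter.Tendsto
        (fun n => normS (⇑e) a s
          (f - ∑ i ∈ Finset.range n, (t i * (inner ℝ f (e (σ i)) : ℝ)) • fvec (⇑e) σ t i))
        Filter.atTop (nhds 0)) := by
  refine ⟨fun i => mem_iInter.2 fun s => fvec_mem_Xs e.orthonormal a σ t i s, fun f _ s => ?_⟩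
  simp_rw [sum_smul_fvec hσmono ht (fun k => inner ℝ f (e k)),
    normS_sub_sum_inner_smul e.orthonormal]
  have hexhaust : Tendsto (fun n => (Finset.range n).image σ) atTop atTop :=
    (tendsto_finset_image_atTop_atTop (Function.rightInverse_surjInv hσsurj)).comp
      tendsto_finset_range
  simpa using ((tendsto_tsum_compl_atTop_zero fun k => (a k s * inner ℝ f (e k)) ^ 2).comp
    hexhaust).sqrt

theorem frechet_frame_reconstruction
    {X₀ : Type*} [NormedAddCommGroup X₀] [InnerProductSpace ℝ X₀] [CompleteSpace X₀]
    (e : HilbertBasis ℕ ℝ X₀) (a : ℕ → ℕ → ℝ)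
    (ha0 : ∀ i, a i 0 = 1) (ha1 : ∀ i s, 1 ≤ a i s)
    (hamono : ∀ i s, a i s ≤ a i (s + 1))
    (σ : ℕ → ℕ) (t : ℕ → ℝ)
    (hσmono : Monotone σ) (hσsurj : Function.Surjective σ)
    (hσtend : Filter.Tendsto σ Filter.atTop Filter.atTop)
    (ht : ∀ i, t i ≠ 0) :
    (∀ i : ℕ, fvec (⇑e) σ t i ∈ ⋂ s, Xs (⇑e) a s) ∧
    (∀ f ∈ ⋂ s, Xs (⇑e) a s, ∀ s : ℕ,
      Filter.Tendsto
        (fun n => normS (⇑e) a s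
          (f - ∑ i ∈ Finset.range n, (t i * (inner ℝ f (e (σ i)) : ℝ)) • fvec (⇑e) σ t i))
        Filter.atTop (nhds 0)) :=
  frechet_frame_reconstruction_general e a σ t hσmono hσsurj ht
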